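/- arXiv:2102.11653 — 2 statements merged into one kernel-verified Lean document; each statement's English description precedes it below -/
import Mathlib

section
/- Let K be a field, P ∈ K[X] an irreducible polynomial, A := K[X]/(P), and g a finite-dimensional Lie algebra over K carrying a nondegenerate invariant symmetric bilinear form B. Let φ : A → K be a nonzero K-linear map. Equip A ⊗_K g with its Lie bracket determined by ⁅a₁ ⊗ x, a₂ ⊗ y⁆ = (a₁a₂) ⊗ ⁅x,y⁆. Then the K-bilinear form B_φ on A ⊗_K g determined by B_φ(a₁ ⊗ x, a₂ ⊗ y) = φ(a₁a₂)·B(x,y) is a nondegenerate invariant symmetric bilinear form on the K-Lie algebra A ⊗_K g. -/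
/-!
Write `B_A : (A ⊗ g) × (A ⊗ g) → A` for the `A`-bilinear base change of `B`, so that
`B_φ = φ ∘ B_A`. Symmetry and invariance hold for `B_A` on pure tensors, hence everywhere, and
pass through `φ`. For nondegeneracy, `B_A` is nondegenerate because pairing with `1 ⊗ eⱼ` reads
off the coordinates in the `A`-basis `1 ⊗ e'ᵢ`, where `e'` is the `B`-dual basis of a basis `e`
of `g`. If `B_φ(u, ·) = 0`, then `φ(a · B_A(u, v)) = B_φ(u, a • v) = 0` for all `a ∈ A`; since
`A` is a field and `φ ≠ 0`, this forces `B_A(u, v) = 0` for all `v`, so `u = 0`.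
-/

open TensorProduct

theorem LinearMap.eq_zero_of_forall_map_mul_eq_zero {K A M : Type*} [Semiring K] [DivisionRing A]
    [AddCommMonoid M] [Module K A] [Module K M] {φ : A →ₗ[K] M} (hφ : φ ≠ 0) {a : A}
    (h : ∀ b, φ (a * b) = 0) : a = 0 := by
  by_contra ha
  obtain ⟨c, hc⟩ := DFunLike.ne_iff.mp hφ
  exact hc (by simpa [mul_inv_cancel_left₀ ha] using h (a⁻¹ * c))

namespace LinearMap.BilinForm

theorem baseChange_lie_invariant {K A L : Type*} [CommRing K] [CommRing A] [Algebra K A]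
    [LieRing L] [LieAlgebra K L] {B : LinearMap.BilinForm K L}
    (hB : ∀ x y z : L, B ⁅x, z⁆ y = B x ⁅z, y⁆) (u v w : A ⊗[K] L) :
    B.baseChange A ⁅u, w⁆ v = B.baseChange A u ⁅w, v⁆ := by
  induction u using TensorProduct.induction_on with
  | zero => simp
  | add u₁ u₂ h₁ h₂ => simp only [add_lie, map_add, LinearMap.add_apply, h₁, h₂]
  | tmul a x =>
    induction w using TensorProduct.induction_on with
    | zero => simp
    | add w₁ w₂ h₁ h₂ => simp only [add_lie, lie_add, map_add, LinearMap.add_apply, h₁, h₂]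
    | tmul c z =>
      induction v using TensorProduct.induction_on with
      | zero => simp
      | add v₁ v₂ h₁ h₂ => simp only [lie_add, map_add, h₁, h₂]
      | tmul b y =>
        simp only [LieAlgebra.ExtendScalars.bracket_tmul, baseChange_tmul, hB, mul_assoc]

theorem separatingLeft_baseChange {K A V : Type*} [Field K] [CommSemiring A] [Algebra K A]
    [AddCommGroup V] [Module K V] [FiniteDimensional K V] {B : LinearMap.BilinForm K V}
    (hB : B.SeparatingLeft) : (B.baseChange A).SeparatingLeft := by
  intro u hu
  set e := Module.finBasis K V
  set f := Algebra.TensorProduct.basis A (B.dualBasis (.ofSeparatingLeft hB) e)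
  have flip_eq_coord : ∀ j, (B.baseChange A).flip (1 ⊗ₜ e j) = f.coord j := fun j =>
    f.ext fun i => by simp [f, apply_dualBasis_left, Finsupp.single_apply, eq_comm]
  exact f.forall_coord_eq_zero_iff.mp fun j => by rw [← flip_eq_coord, flip_apply, hu]

section compBaseChange

variable {K A M : Type*} [CommSemiring K] [CommSemiring A] [Algebra K A]
  [AddCommMonoid M] [Module K M]

def compBaseChange (φ : A →ₗ[K] K) (B : LinearMap.BilinForm K M) :
    LinearMap.BilinForm K (A ⊗[K] M) :=
  ((B.baseChange A).restrictScalars₁₂ K K).compr₂ φ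

theorem compBaseChange_apply (φ : A →ₗ[K] K) (B : LinearMap.BilinForm K M) (u v : A ⊗[K] M) :
    compBaseChange φ B u v = φ (B.baseChange A u v) :=
  rfl

@[simp]
theorem compBaseChange_tmul (φ : A →ₗ[K] K) (B : LinearMap.BilinForm K M) (a b : A) (x y : M) :
    compBaseChange φ B (a ⊗ₜ x) (b ⊗ₜ y) = φ (a * b) * B x y := by
  rw [compBaseChange_apply, baseChange_tmul, map_smul, smul_eq_mul, mul_comm]

theorem compBaseChange_comm (φ : A →ₗ[K] K) {B : LinearMap.BilinForm K M}
    (hB : ∀ x y, B x y = B y x) (u v : A ⊗[K] M) :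
    compBaseChange φ B u v = compBaseChange φ B v u :=
  congrArg φ ((IsSymm.baseChange A ⟨hB⟩).eq u v)

end compBaseChange

theorem compBaseChange_lie_invariant {K A L : Type*} [CommRing K] [CommRing A] [Algebra K A]
    [LieRing L] [LieAlgebra K L] (φ : A →ₗ[K] K) {B : LinearMap.BilinForm K L}
    (hB : ∀ x y z : L, B ⁅x, z⁆ y = B x ⁅z, y⁆) (u v w : A ⊗[K] L) :
    compBaseChange φ B ⁅u, w⁆ v = compBaseChange φ B u ⁅w, v⁆ := by
  rw [compBaseChange_apply, compBaseChange_apply, baseChange_lie_invariant hB]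

theorem separatingLeft_compBaseChange {K A V : Type*} [Field K] [Field A] [Algebra K A]
    [AddCommGroup V] [Module K V] [FiniteDimensional K V] {φ : A →ₗ[K] K} (hφ : φ ≠ 0)
    {B : LinearMap.BilinForm K V} (hB : B.SeparatingLeft) :
    (compBaseChange φ B).SeparatingLeft := by
  intro u hu
  refine separatingLeft_baseChange hB u fun v ↦
    φ.eq_zero_of_forall_map_mul_eq_zero hφ fun a ↦ ?_
  rw [mul_comm, ← smul_eq_mul, ← map_smul]
  exact hu (a • v)

end LinearMap.BilinForm

open LinearMap.BilinForm in
/-- For `A = K[X]/(P)` with `P` irreducible, a finite-dimensional Lie algebra `g`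
with a NIS `B`, and a nonzero linear map `φ : A → K`, the bilinear form on
`A ⊗ g` determined by `B_φ(a₁ ⊗ x, a₂ ⊗ y) = φ(a₁a₂)·B(x,y)` is a NIS. -/
theorem tensor_form_is_nis
    {K : Type*} [Field K] (P : Polynomial K) (hP : Irreducible P)
    {g : Type*} [LieRing g] [LieAlgebra K g] [FiniteDimensional K g]
    (B : g →ₗ[K] g →ₗ[K] K)
    (hsymm : ∀ x y : g, B x y = B y x)
    (hinv : ∀ x y z : g, B ⁅x, z⁆ y = B x ⁅z, y⁆)
    (hnd : ∀ x : g, (∀ y : g, B x y = 0) → x = 0)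
    (φ : (Polynomial K ⧸ Ideal.span {P}) →ₗ[K] K) (hφ : φ ≠ 0)
    (C : ((Polynomial K ⧸ Ideal.span {P}) ⊗[K] g) →ₗ[K]
      ((Polynomial K ⧸ Ideal.span {P}) ⊗[K] g) →ₗ[K] K)
    (hC : ∀ (a₁ a₂ : Polynomial K ⧸ Ideal.span {P}) (x y : g),
      C (a₁ ⊗ₜ[K] x) (a₂ ⊗ₜ[K] y) = φ (a₁ * a₂) * B x y) :
    (∀ u v : (Polynomial K ⧸ Ideal.span {P}) ⊗[K] g, C u v = C v u) ∧
    (∀ u v w : (Polynomial K ⧸ Ideal.span {P}) ⊗[K] g, C ⁅u, w⁆ v = C u ⁅w, v⁆) ∧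
    (∀ u : (Polynomial K ⧸ Ideal.span {P}) ⊗[K] g,
      (∀ v : (Polynomial K ⧸ Ideal.span {P}) ⊗[K] g, C u v = 0) → u = 0) := by
  have := PrincipalIdealRing.isMaximal_of_irreducible hP
  let := Ideal.Quotient.field (Ideal.span {P})
  obtain rfl : C = compBaseChange φ B :=
    TensorProduct.ext' fun a x ↦ TensorProduct.ext' fun b y ↦ by rw [hC, compBaseChange_tmul]
  exact ⟨compBaseChange_comm φ hsymm, compBaseChange_lie_invariant φ hinv,
    separatingLeft_compBaseChange hφ hnd⟩
end

section
/- Let K be a field, P ∈ K[X] an irreducible polynomial of degree d, A := K[X]/(P), and g a nonzero finite-dimensional Lie algebra over K carrying a nonzero symmetric invariant bilinear form B. Equip A ⊗_K g with its Lie bracket determined by ⁅a₁ ⊗ x, a₂ ⊗ y⁆ = (a₁a₂) ⊗ ⁅x,y⁆. Then the K-vector space of symmetric invariant K-bilinear forms on A ⊗_K g has dimension at least d. -/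
/-!
A linear functional `φ` on `A` gives the form `(a ⊗ x, b ⊗ y) ↦ φ (a b) B(x, y)` on
`A ⊗ g`, symmetric and invariant because `B` is and `A` is commutative and associative.
If `B(x, y) ≠ 0`, evaluating at `(a ⊗ x, 1 ⊗ y)` recovers `φ a` up to that nonzero factor,
so `φ ↦` this form embeds `A*` into the symmetric invariant forms, and
`dim A* ≥ dim A = d`.
-/

open TensorProduct

/-- The space of symmetric invariant `K`-bilinear forms on a Lie ring `L` which is
also a `K`-vector space. -/
def symInvForms (K : Type*) [Field K] (L : Type*) [LieRing L]
    [Module K L] : Submodule K (L →ₗ[K] L →ₗ[K] K) where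
  carrier := {B | (∀ x y : L, B x y = B y x) ∧
    ∀ x y z : L, B ⁅x, z⁆ y = B x ⁅z, y⁆}
  add_mem' := by
    rintro B C ⟨hB1, hB2⟩ ⟨hC1, hC2⟩
    refine ⟨fun x y => ?_, fun x y z => ?_⟩
    · simp [hB1 x y, hC1 x y]
    · simp [hB2 x y z, hC2 x y z]
  zero_mem' := ⟨fun x y => by simp, fun x y z => by simp⟩
  smul_mem' := by
    rintro c B ⟨hB1, hB2⟩
    refine ⟨fun x y => ?_, fun x y z => ?_⟩
    · simp [hB1 x y]
    · simp [hB2 x y z]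

section TensorForm

variable {K A g : Type*} [CommRing K] [CommRing A] [Algebra K A] [AddCommGroup g] [Module K g]

noncomputable def tensorForm (B : g →ₗ[K] g →ₗ[K] K) :
    Module.Dual K A →ₗ[K] A ⊗[K] g →ₗ[K] A ⊗[K] g →ₗ[K] K :=
  LinearMap.BilinForm.tensorDistrib K K ∘ₗ (TensorProduct.mk K _ _).flip B ∘ₗ
    LinearMap.lcomp K _ (LinearMap.mul K A) ∘ₗ LinearMap.llcomp K A A K

@[simp]
theorem tensorForm_tmul (B : g →ₗ[K] g →ₗ[K] K) (φ : Module.Dual K A) (a b : A) (x y : g) :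
    tensorForm B φ (a ⊗ₜ x) (b ⊗ₜ y) = φ (a * b) * B x y := by
  simp [tensorForm, LinearMap.BilinForm.tensorDistrib_tmul, mul_comm]

theorem tensorForm_injective [NoZeroDivisors K] {B : g →ₗ[K] g →ₗ[K] K} (hB : B ≠ 0) :
    Function.Injective (tensorForm (A := A) B) := by
  obtain ⟨x, hx⟩ := DFunLike.ne_iff.mp hB
  obtain ⟨y, hy⟩ := DFunLike.ne_iff.mp hx
  refine (injective_iff_map_eq_zero _).mpr fun φ hφ => LinearMap.ext fun a => ?_
  have h := LinearMap.congr_fun₂ hφ (a ⊗ₜ x) (1 ⊗ₜ y)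
  rw [tensorForm_tmul, mul_one] at h
  exact (mul_eq_zero.mp h).resolve_right hy

end TensorForm

section LieAlgebra

variable {K A g : Type*} [Field K] [CommRing A] [Algebra K A] [LieRing g] [LieAlgebra K g]

theorem mem_symInvForms_of_tmul {F : A ⊗[K] g →ₗ[K] A ⊗[K] g →ₗ[K] K}
    (hsymm : ∀ (a b : A) (x y : g), F (a ⊗ₜ x) (b ⊗ₜ y) = F (b ⊗ₜ y) (a ⊗ₜ x))
    (hinv : ∀ (a b c : A) (x y z : g),
      F ⁅a ⊗ₜ[K] x, c ⊗ₜ[K] z⁆ (b ⊗ₜ y) = F (a ⊗ₜ x) ⁅c ⊗ₜ[K] z, b ⊗ₜ[K] y⁆) :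
    F ∈ symInvForms K (A ⊗[K] g) := by
  have hflip : F.flip = F := by
    ext a x b y
    exact hsymm b a y x
  refine ⟨fun u v => LinearMap.congr_fun₂ hflip v u, fun u v w => ?_⟩
  induction u using TensorProduct.induction_on with
  | zero => simp
  | add u₁ u₂ h₁ h₂ => simp only [add_lie, map_add, LinearMap.add_apply, h₁, h₂]
  | tmul a x =>
    induction w using TensorProduct.induction_on with
    | zero => simp
    | add w₁ w₂ h₁ h₂ => simp only [lie_add, add_lie, map_add, LinearMap.add_apply, h₁, h₂]
    | tmul c z =>
      induction v using TensorProduct.induction_on with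
      | zero => simp
      | add v₁ v₂ h₁ h₂ => simp only [lie_add, map_add, h₁, h₂]
      | tmul b y => exact hinv a b c x y z

theorem tensorForm_mem_symInvForms {B : g →ₗ[K] g →ₗ[K] K}
    (hsymm : ∀ x y : g, B x y = B y x)
    (hinv : ∀ x y z : g, B ⁅x, z⁆ y = B x ⁅z, y⁆) (φ : Module.Dual K A) :
    tensorForm B φ ∈ symInvForms K (A ⊗[K] g) := by
  refine mem_symInvForms_of_tmul (fun a b x y => ?_) (fun a b c x y z => ?_)
  · rw [tensorForm_tmul, tensorForm_tmul, mul_comm a, hsymm]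
  · simp only [LieAlgebra.ExtendScalars.bracket_tmul, tensorForm_tmul, hinv, mul_assoc]

end LieAlgebra

universe u

theorem Module.finrank_le_rank_dual (K V : Type u) [Field K] [AddCommGroup V] [Module K V] :
    (Module.finrank K V : Cardinal) ≤ Module.rank K (Module.Dual K V) :=
  calc (Module.finrank K V : Cardinal) ≤ Module.rank K V := Cardinal.natCast_toNat_le _
    _ ≤ Module.rank K (Module.Dual K V) := by
      simpa using
        LinearMap.lift_rank_le_of_injective _ (Module.Free.chooseBasis K V).toDual_injective

theorem rank_symInvForms_ge_degree_general
    {K : Type*} [Field K] (P : Polynomial K)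
    {g : Type*} [LieRing g] [LieAlgebra K g]
    (B : g →ₗ[K] g →ₗ[K] K) (hB : B ≠ 0)
    (hsymm : ∀ x y : g, B x y = B y x)
    (hinv : ∀ x y z : g, B ⁅x, z⁆ y = B x ⁅z, y⁆) :
    (P.natDegree : Cardinal) ≤
      Module.rank K (symInvForms K ((Polynomial K ⧸ Ideal.span {P}) ⊗[K] g)) := by
  let G := (tensorForm (A := Polynomial K ⧸ Ideal.span {P}) B).codRestrict _
    (tensorForm_mem_symInvForms hsymm hinv)
  have hG : Function.Injective G := fun _ _ h => tensorForm_injective hB (congrArg Subtype.val h)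
  have hdual := Module.finrank_le_rank_dual K (Polynomial K ⧸ Ideal.span {P})
  rw [finrank_quotient_span_eq_natDegree] at hdual
  simpa using (Cardinal.lift_le.mpr hdual).trans (LinearMap.lift_rank_le_of_injective G hG)

/-- For `A = K[X]/(P)` with `P` irreducible of degree `d` and a nonzero
finite-dimensional Lie algebra `g` carrying a nonzero symmetric invariant form,
the space of symmetric invariant forms on `A ⊗ g` has dimension at least `d`. -/
theorem rank_symInvForms_ge_degree
    {K : Type*} [Field K] (P : Polynomial K) (hP : Irreducible P)
    {g : Type*} [LieRing g] [LieAlgebra K g] [FiniteDimensional K g] [Nontrivial g]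
    (B : g →ₗ[K] g →ₗ[K] K) (hB : B ≠ 0)
    (hsymm : ∀ x y : g, B x y = B y x)
    (hinv : ∀ x y z : g, B ⁅x, z⁆ y = B x ⁅z, y⁆) :
    (P.natDegree : Cardinal) ≤
      Module.rank K (symInvForms K ((Polynomial K ⧸ Ideal.span {P}) ⊗[K] g)) :=
  rank_symInvForms_ge_degree_general P B hB hsymm hinv
end
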